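/- Let (E, d_b) be a metric space, c > 0, and 1 ≤ p < ∞, and let d_G be the GOSPA base distance on Option E (d_G(some x, some y) = min(c, d_b(x,y)), d_G(none, none) = 0, and d_G = c/2^(1/p) otherwise). Let x : {1,…,nX} → Option E, z : {1,…,nZ} → Option E, y : {1,…,nY} → Option E, and extend each family by setting the (last+1)-th element to none (so x_{nX+1} = none, z_{nZ+1} = none, y_{nY+1} = none). Define the distance matrices D_XZ(i,l) = d_G(x_i, z_l)^p, D_ZY(l,j) = d_G(z_l, y_j)^p, D_XY(i,j) = d_G(x_i, y_j)^p, and write d_XZ(i,l) = D_XZ(i,l)^(1/p), d_ZY(l,j) = D_ZY(l,j)^(1/p). Let A ((nX+1)×(nZ+1)) and B ((nZ+1)×(nY+1)) satisfy the relaxed assignment constraints and let W be the (nX+1)×(nY+1) matrix obtained from A and B by composition: W(i,j) = Σ_{l=1}^{nZ} A(i,l)B(l,j) for i ≤ nX, j ≤ nY, W(i, nY+1) = 1 − Σ_{j=1}^{nY} W(i,j), W(nX+1, j) = 1 − Σ_{i=1}^{nX} W(i,j), W(nX+1, nY+1) = 0. Then Σ_{i,j} D_XY(i,j)·W(i,j)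 ≤ Σ_{i=1}^{nX} Σ_{j=1}^{nY} Σ_{l=1}^{nZ} (d_XZ(i,l) + d_ZY(l,j))^p A(i,l)B(l,j) + Σ_{j=1}^{nY} D_ZY(nZ+1, j)·B(nZ+1, j) + Σ_{j=1}^{nY} Σ_{l=1}^{nZ} (d_XZ(nX+1, l) + d_ZY(l,j))^p A(nX+1, l)B(l,j) + Σ_{i=1}^{nX} D_XZ(i, nZ+1)·A(i, nZ+1) + Σ_{i=1}^{nX} Σ_{l=1}^{nZ} (d_XZ(i,l) + d_ZY(l, nY+1))^p A(i,l)B(l, nY+1). -/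
import Mathlib


open Finset

noncomputable section

/-- The GOSPA base distance on `Option E`. -/
def dG {E : Type*} [MetricSpace E] (c p : ℝ) : Option E → Option E → ℝ
  | some x, some y => min c (dist x y)
  | none, none => 0
  | _, _ => c / 2 ^ (1 / p)

/-- Relaxed assignment constraints. -/
def Relaxed {m n : ℕ} (W : Matrix (Fin (m + 1)) (Fin (n + 1)) ℝ) : Prop :=
  (∀ i j, 0 ≤ W i j) ∧
  (∀ j : Fin n, ∑ i, W i j.castSucc = 1) ∧
  (∀ i : Fin m, ∑ j, W i.castSucc j = 1) ∧
  W (Fin.last m) (Fin.last n) = 0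

/-- Extend a family of `n` possibly-present targets with an extra `none` element. -/
def extT {E : Type*} {n : ℕ} (x : Fin n → Option E) : Fin (n + 1) → Option E :=
  fun i => if h : (i : ℕ) < n then x ⟨i, h⟩ else none

/-- Composition of soft-assignment matrices, with last row/column completed. -/
def compW {nX nZ nY : ℕ} (A : Matrix (Fin (nX + 1)) (Fin (nZ + 1)) ℝ)
    (B : Matrix (Fin (nZ + 1)) (Fin (nY + 1)) ℝ) :
    Matrix (Fin (nX + 1)) (Fin (nY + 1)) ℝ :=
  fun i j =>
    if _hi : (i : ℕ) < nX then
      if _hj : (j : ℕ) < nY then ∑ l : Fin nZ, A i l.castSucc * B l.castSucc j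
      else 1 - ∑ j' : Fin nY, ∑ l : Fin nZ, A i l.castSucc * B l.castSucc j'.castSucc
    else
      if _hj : (j : ℕ) < nY then
        1 - ∑ i' : Fin nX, ∑ l : Fin nZ, A i'.castSucc l.castSucc * B l.castSucc j
      else 0


lemma dG_nonneg {E : Type*} [MetricSpace E] {c p : ℝ} (hc : 0 < c) :
    ∀ a b : Option E, 0 ≤ dG c p a b
  | some _, some _ => le_min hc.le dist_nonneg
  | none, none => le_refl 0
  | some _, none => div_nonneg hc.le (Real.rpow_nonneg (by norm_num) _)
  | none, some _ => div_nonneg hc.le (Real.rpow_nonneg (by norm_num) _)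

lemma dG_triangle {E : Type*} [MetricSpace E] {c p : ℝ} (hc : 0 < c) (hp : 1 ≤ p) :
    ∀ a w b : Option E, dG c p a b ≤ dG c p a w + dG c p w b := by
  have hp0 : 0 < p := lt_of_lt_of_le one_pos hp
  have h2 : (0:ℝ) < 2 ^ (1/p) := Real.rpow_pos_of_pos two_pos _
  have hle2 : (2:ℝ) ^ (1/p) ≤ 2 := by
    calc (2:ℝ) ^ (1/p) ≤ 2 ^ (1:ℝ) :=
          Real.rpow_le_rpow_of_exponent_le one_le_two (by rw [div_le_one hp0]; exact hp)
      _ = 2 := Real.rpow_one 2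
  have hch : c / 2 ≤ c / 2 ^ (1/p) := div_le_div_of_nonneg_left hc.le h2 hle2
  have hh0 : 0 < c / 2 ^ (1/p) := div_pos hc h2
  have hmin0 : ∀ u v : E, 0 ≤ min c (dist u v) := fun u v => le_min hc.le dist_nonneg
  have key : ∀ s t : ℝ, 0 ≤ s → 0 ≤ t → min c (s + t) ≤ min c s + min c t := by
    intro s t hs ht
    rcases le_or_gt c s with h|h
    · rw [min_eq_left h]
      calc min c (s+t) ≤ c := min_le_left _ _
        _ ≤ c + min c t := le_add_of_nonneg_right (le_min hc.le ht)
    · rcases le_or_gt c t with h'|h'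
      · rw [min_eq_left h']
        calc min c (s+t) ≤ c := min_le_left _ _
          _ ≤ min c s + c := le_add_of_nonneg_left (le_min hc.le hs)
      · rw [min_eq_right h.le, min_eq_right h'.le]
        exact min_le_right _ _
  rintro (a|a) (w|w) (b|b) <;> simp only [dG]
  · linarith
  · linarith
  · linarith
  · linarith [hmin0 w b]
  · linarith
  · linarith [min_le_left c (dist a b)]
  · linarith [hmin0 a w]
  · calc min c (dist a b) ≤ min c (dist a w + dist w b) :=
          min_le_min le_rfl (dist_triangle a w b)
      _ ≤ _ := key _ _ dist_nonneg dist_nonneg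

lemma extT_last {E : Type*} {n : ℕ} (x : Fin n → Option E) : extT x (Fin.last n) = none := by
  simp [extT]

/-- Localisation-cost inequality used in the triangle-inequality proof of the LP
trajectory metric.  Here `D_XY(i,j) = dG(x_i, y_j)^p` and `d_XZ = D_XZ^(1/p)`. -/
theorem localisation_ineq {E : Type*} [MetricSpace E] {nX nZ nY : ℕ}
    (c p : ℝ) (hc : 0 < c) (hp : 1 ≤ p)
    (x : Fin nX → Option E) (z : Fin nZ → Option E) (y : Fin nY → Option E)
    (A : Matrix (Fin (nX + 1)) (Fin (nZ + 1)) ℝ)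
    (B : Matrix (Fin (nZ + 1)) (Fin (nY + 1)) ℝ)
    (hA : Relaxed A) (hB : Relaxed B) :
    ∑ i : Fin (nX + 1), ∑ j : Fin (nY + 1),
        dG c p (extT x i) (extT y j) ^ p * compW A B i j ≤
      (∑ i : Fin nX, ∑ j : Fin nY, ∑ l : Fin nZ,
          ((dG c p (extT x i.castSucc) (extT z l.castSucc) ^ p) ^ (1 / p) +
            (dG c p (extT z l.castSucc) (extT y j.castSucc) ^ p) ^ (1 / p)) ^ p *
            (A i.castSucc l.castSucc * B l.castSucc j.castSucc)) +
      (∑ j : Fin nY,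
          dG c p (extT z (Fin.last nZ)) (extT y j.castSucc) ^ p *
            B (Fin.last nZ) j.castSucc) +
      (∑ j : Fin nY, ∑ l : Fin nZ,
          ((dG c p (extT x (Fin.last nX)) (extT z l.castSucc) ^ p) ^ (1 / p) +
            (dG c p (extT z l.castSucc) (extT y j.castSucc) ^ p) ^ (1 / p)) ^ p *
            (A (Fin.last nX) l.castSucc * B l.castSucc j.castSucc)) +
      (∑ i : Fin nX,
          dG c p (extT x i.castSucc) (extT z (Fin.last nZ)) ^ p *
            A i.castSucc (Fin.last nZ)) +
      (∑ i : Fin nX, ∑ l : Fin nZ,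
          ((dG c p (extT x i.castSucc) (extT z l.castSucc) ^ p) ^ (1 / p) +
            (dG c p (extT z l.castSucc) (extT y (Fin.last nY)) ^ p) ^ (1 / p)) ^ p *
            (A i.castSucc l.castSucc * B l.castSucc (Fin.last nY))) := by
  obtain ⟨hA0, hAcol, hArow, hAlast⟩ := hA
  obtain ⟨hB0, hBcol, hBrow, hBlast⟩ := hB
  have hp0 : p ≠ 0 := by intro h; rw [h] at hp; linarith
  have hpnn : (0:ℝ) ≤ p := by linarith
  have hsimp : ∀ a b : Option E, ((dG c p a b ^ p) ^ (1/p)) = dG c p a b := fun a b => by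
    rw [one_div, Real.rpow_rpow_inv (dG_nonneg hc a b) hp0]
  have hkey : ∀ a w b : Option E, dG c p a b ^ p ≤ (dG c p a w + dG c p w b) ^ p := fun a w b =>
    Real.rpow_le_rpow (dG_nonneg hc a b) (dG_triangle hc hp a w b) hpnn
  have hW1 : ∀ (i : Fin nX) (j : Fin nY), compW A B i.castSucc j.castSucc =
      ∑ l : Fin nZ, A i.castSucc l.castSucc * B l.castSucc j.castSucc := by
    intro i j
    simp [compW]
  have hW4 : compW A B (Fin.last nX) (Fin.last nY) = 0 := by
    simp [compW]
  have hW2 : ∀ i : Fin nX, compW A B i.castSucc (Fin.last nY) =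
      A i.castSucc (Fin.last nZ) +
        ∑ l : Fin nZ, A i.castSucc l.castSucc * B l.castSucc (Fin.last nY) := by
    intro i
    simp only [compW, Fin.coe_castSucc, Fin.is_lt, dif_pos, Fin.val_last, lt_self_iff_false,
      dite_false]
    rw [Finset.sum_comm]
    have h1 : ∀ l : Fin nZ, ∑ j' : Fin nY, A i.castSucc l.castSucc * B l.castSucc j'.castSucc
        = A i.castSucc l.castSucc * (1 - B l.castSucc (Fin.last nY)) := by
      intro l
      rw [← Finset.mul_sum]
      have := hBrow l
      rw [Fin.sum_univ_castSucc] at this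
      congr 1
      linarith
    simp only [h1, mul_sub, mul_one, Finset.sum_sub_distrib]
    have h2 : ∑ l : Fin nZ, A i.castSucc l.castSucc = 1 - A i.castSucc (Fin.last nZ) := by
      have := hArow i
      rw [Fin.sum_univ_castSucc] at this
      linarith
    rw [h2]; ring
  have hW3 : ∀ j : Fin nY, compW A B (Fin.last nX) j.castSucc =
      B (Fin.last nZ) j.castSucc +
        ∑ l : Fin nZ, A (Fin.last nX) l.castSucc * B l.castSucc j.castSucc := by
    intro j
    simp only [compW, Fin.coe_castSucc, Fin.is_lt, dif_pos, Fin.val_last, lt_self_iff_false,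
      dite_false]
    have h1 : ∀ l : Fin nZ, ∑ i' : Fin nX, A i'.castSucc l.castSucc * B l.castSucc j.castSucc
        = (1 - A (Fin.last nX) l.castSucc) * B l.castSucc j.castSucc := by
      intro l
      rw [← Finset.sum_mul]
      have := hAcol l
      rw [Fin.sum_univ_castSucc] at this
      congr 1
      linarith
    rw [Finset.sum_comm]
    simp only [h1, sub_mul, one_mul, Finset.sum_sub_distrib]
    have h2 : ∑ l : Fin nZ, B l.castSucc j.castSucc = 1 - B (Fin.last nZ) j.castSucc := by
      have := hBcol j
      rw [Fin.sum_univ_castSucc] at this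
      linarith
    rw [h2]; ring
  simp only [hsimp]
  simp only [Fin.sum_univ_castSucc]
  simp only [hW1, hW2, hW3, hW4, mul_zero, add_zero, extT_last]
  simp only [Finset.mul_sum, mul_add, Finset.sum_add_distrib]
  have b1 : (∑ i : Fin nX, ∑ j : Fin nY, ∑ l : Fin nZ,
      dG c p (extT x i.castSucc) (extT y j.castSucc) ^ p *
        (A i.castSucc l.castSucc * B l.castSucc j.castSucc)) ≤
      ∑ i : Fin nX, ∑ j : Fin nY, ∑ l : Fin nZ,
        (dG c p (extT x i.castSucc) (extT z l.castSucc) +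
          dG c p (extT z l.castSucc) (extT y j.castSucc)) ^ p *
          (A i.castSucc l.castSucc * B l.castSucc j.castSucc) := by
    refine Finset.sum_le_sum fun i _ => Finset.sum_le_sum fun j _ =>
      Finset.sum_le_sum fun l _ => ?_
    exact mul_le_mul_of_nonneg_right (hkey _ _ _) (mul_nonneg (hA0 _ _) (hB0 _ _))
  have b3 : (∑ j : Fin nY, ∑ l : Fin nZ,
      dG c p none (extT y j.castSucc) ^ p *
        (A (Fin.last nX) l.castSucc * B l.castSucc j.castSucc)) ≤
      ∑ j : Fin nY, ∑ l : Fin nZ,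
        (dG c p none (extT z l.castSucc) + dG c p (extT z l.castSucc) (extT y j.castSucc)) ^ p *
          (A (Fin.last nX) l.castSucc * B l.castSucc j.castSucc) := by
    refine Finset.sum_le_sum fun j _ => Finset.sum_le_sum fun l _ => ?_
    exact mul_le_mul_of_nonneg_right (hkey _ _ _) (mul_nonneg (hA0 _ _) (hB0 _ _))
  have b5 : (∑ i : Fin nX, ∑ l : Fin nZ,
      dG c p (extT x i.castSucc) none ^ p *
        (A i.castSucc l.castSucc * B l.castSucc (Fin.last nY))) ≤
      ∑ i : Fin nX, ∑ l : Fin nZ,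
        (dG c p (extT x i.castSucc) (extT z l.castSucc) + dG c p (extT z l.castSucc) none) ^ p *
          (A i.castSucc l.castSucc * B l.castSucc (Fin.last nY)) := by
    refine Finset.sum_le_sum fun i _ => Finset.sum_le_sum fun l _ => ?_
    exact mul_le_mul_of_nonneg_right (hkey _ _ _) (mul_nonneg (hA0 _ _) (hB0 _ _))
  linarith [b1, b3, b5]
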